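/- arXiv:1202.5511 — 4 statements merged into one kernel-verified Lean document; each statement's English description precedes it below -/
import Mathlib

section
/- Let S be a finite semigroup satisfying ((st)^ω(syt)^ω)^ω = ((syt)^ω(st)^ω)^ω for all s, y, t ∈ S. Then S satisfies ((ax)^ω(bx)^ω)^ω = ((ax)^ω(bx)^ω)^ω (ax)^ω for all a, b, x ∈ S. -/
/-- iterated power in a semigroup: `pw x n = x^(n+1)` -/
def pw {S : Type*} [Semigroup S] (x : S) : ℕ → S
  | 0 => x
  | n + 1 => pw x n * x

theorem stmt_6 {S : Type*} [Semigroup S] [Finite S] (ω : S → S)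
    (hωpow : ∀ x : S, ∃ n : ℕ, ω x = pw x n)
    (hωid : ∀ x : S, ω x * ω x = ω x)
    (hωuniq : ∀ (x : S) (n : ℕ), pw x n * pw x n = pw x n → pw x n = ω x)
    (h : ∀ s y t : S,
      ω (ω (s * t) * ω (s * y * t)) = ω (ω (s * y * t) * ω (s * t))) :
    ∀ a b x : S,
      ω (ω (a * x) * ω (b * x)) = ω (ω (a * x) * ω (b * x)) * ω (a * x) := by
  have idem_fix : ∀ z : S, z * z = z → ω z = z := fun z hz => (hωuniq z 0 hz).symm
  have pw_add : ∀ (z : S) (p q : ℕ), pw z p * pw z q = pw z (p + q + 1) := by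
    intro z p q
    induction q with
    | zero => rfl
    | succ q ih =>
      show pw z p * (pw z q * z) = _
      rw [← mul_assoc, ih]
      rfl
  intro a b x
  obtain ⟨n, hn⟩ := hωpow (a * x)
  obtain ⟨m, hm⟩ := hωpow (b * x)
  have h1 : pw (a * x) (n + n) * (a * x) = ω (a * x) := by
    calc pw (a * x) (n + n) * (a * x) = pw (a * x) (n + n + 1) := rfl
      _ = pw (a * x) n * pw (a * x) n := (pw_add (a * x) n n).symm
      _ = ω (a * x) * ω (a * x) := by rw [hn]
      _ = ω (a * x) := hωid (a * x)
  have h2 : pw (b * x) (m + m) * (b * x) = ω (b * x) := by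
    calc pw (b * x) (m + m) * (b * x) = pw (b * x) (m + m + 1) := rfl
      _ = pw (b * x) m * pw (b * x) m := (pw_add (b * x) m m).symm
      _ = ω (b * x) * ω (b * x) := by rw [hm]
      _ = ω (b * x) := hωid (b * x)
  -- e absorbs ω(e*f) on the left
  have hewk : ∀ k : ℕ,
      ω (a * x) * pw (ω (a * x) * ω (b * x)) k = pw (ω (a * x) * ω (b * x)) k := by
    intro k
    induction k with
    | zero =>
      show ω (a * x) * (ω (a * x) * ω (b * x)) = ω (a * x) * ω (b * x)
      rw [← mul_assoc, hωid]
    | succ k ih =>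
      show ω (a * x) * (pw (ω (a * x) * ω (b * x)) k * (ω (a * x) * ω (b * x))) = _
      rw [← mul_assoc, ih]
      rfl
  have hew : ω (a * x) * ω (ω (a * x) * ω (b * x)) = ω (ω (a * x) * ω (b * x)) := by
    obtain ⟨k, hk⟩ := hωpow (ω (a * x) * ω (b * x))
    rw [hk]
    exact hewk k
  have hwe : (ω (ω (a * x) * ω (b * x)) * ω (a * x)) *
      (ω (ω (a * x) * ω (b * x)) * ω (a * x)) = ω (ω (a * x) * ω (b * x)) * ω (a * x) := by
    calc (ω (ω (a * x) * ω (b * x)) * ω (a * x)) *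
          (ω (ω (a * x) * ω (b * x)) * ω (a * x))
        = ω (ω (a * x) * ω (b * x)) *
            ((ω (a * x) * ω (ω (a * x) * ω (b * x))) * ω (a * x)) := by
          simp only [mul_assoc]
      _ = ω (ω (a * x) * ω (b * x)) * (ω (ω (a * x) * ω (b * x)) * ω (a * x)) := by
          rw [hew]
      _ = (ω (ω (a * x) * ω (b * x)) * ω (ω (a * x) * ω (b * x))) * ω (a * x) := by
          rw [mul_assoc]
      _ = ω (ω (a * x) * ω (b * x)) * ω (a * x) := by rw [hωid]
  have H := h (pw (a * x) (n + n) * a) (x * pw (b * x) (m + m) * b) x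
  have hst : (pw (a * x) (n + n) * a) * x = ω (a * x) := by
    rw [mul_assoc]; exact h1
  have hsyt : (pw (a * x) (n + n) * a) * (x * pw (b * x) (m + m) * b) * x
      = ω (a * x) * ω (b * x) := by
    rw [← h1, ← h2]
    simp only [mul_assoc]
  rw [hst, hsyt, idem_fix _ (hωid (a * x)), hew,
    idem_fix _ (hωid (ω (a * x) * ω (b * x))), idem_fix _ hwe] at H
  exact H
end

section
/- Let S be a finite semigroup satisfying both identities ((ax)^ω(bx)^ω)^ω = ((ax)^ω(bx)^ω)^ω (ax)^ω and ((xb)^ω(xa)^ω)^ω = (xa)^ω ((xb)^ω(xa)^ω)^ω for all a, b, x ∈ S. Then S satisfies x((ax)^ω(bx)^ω)^ω = x((bx)^ω(ax)^ω)^ω for all a, b, x ∈ S. -/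
lemma pw_add {S : Type*} [Semigroup S] (x : S) (a b : ℕ) :
    pw x (a + b + 1) = pw x a * pw x b := by
  induction b with
  | zero => rfl
  | succ b ih =>
      show pw x (a + b + 1) * x = _
      rw [ih, mul_assoc]; rfl

lemma conj_pw {S : Type*} [Semigroup S] {x s t : S} (h : x * s = t * x) :
    ∀ n, x * pw s n = pw t n * x := by
  intro n
  induction n with
  | zero => exact h
  | succ n ih =>
      show x * (pw s n * s) = pw t n * t * x
      rw [← mul_assoc, ih, mul_assoc, h, ← mul_assoc]

lemma omega_stretch {S : Type*} [Semigroup S] (ω : S → S)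
    (hωid : ∀ x : S, ω x * ω x = ω x) {x : S} {m : ℕ} (hm : ω x = pw x m) :
    ∀ k, ω x = pw x (m + (m + 1) * k) := by
  intro k
  induction k with
  | zero => simpa using hm
  | succ k ih =>
      have : m + (m + 1) * (k + 1) = (m + (m + 1) * k) + m + 1 := by ring
      rw [this, pw_add, ← ih, ← hm, hωid]

lemma conj_omega {S : Type*} [Semigroup S] (ω : S → S)
    (hωpow : ∀ x : S, ∃ n : ℕ, ω x = pw x n)
    (hωid : ∀ x : S, ω x * ω x = ω x)
    {x s t : S} (h : x * s = t * x) : x * ω s = ω t * x := by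
  obtain ⟨m, hm⟩ := hωpow s
  obtain ⟨l, hl⟩ := hωpow t
  have hs : ω s = pw s (m + (m + 1) * l) := omega_stretch ω hωid hm l
  have ht : ω t = pw t (m + (m + 1) * l) := by
    have : m + (m + 1) * l = l + (l + 1) * m := by ring
    rw [this]; exact omega_stretch ω hωid hl m
  rw [hs, ht, conj_pw h]

theorem stmt_7 {S : Type*} [Semigroup S] [Finite S] (ω : S → S)
    (hωpow : ∀ x : S, ∃ n : ℕ, ω x = pw x n)
    (hωid : ∀ x : S, ω x * ω x = ω x)
    (hωuniq : ∀ (x : S) (n : ℕ), pw x n * pw x n = pw x n → pw x n = ω x)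
    (h1 : ∀ a b x : S,
      ω (ω (a * x) * ω (b * x)) = ω (ω (a * x) * ω (b * x)) * ω (a * x))
    (h2 : ∀ a b x : S,
      ω (ω (x * b) * ω (x * a)) = ω (x * a) * ω (ω (x * b) * ω (x * a))) :
    ∀ a b x : S,
      x * ω (ω (a * x) * ω (b * x)) = x * ω (ω (b * x) * ω (a * x)) := by
  intro a b x
  set P' := ω (a * x)
  set Q' := ω (b * x)
  set P := ω (x * a)
  set Q := ω (x * b)
  have hP : x * P' = P * x := conj_omega ω hωpow hωid (mul_assoc x a x).symm
  have hQ : x * Q' = Q * x := conj_omega ω hωpow hωid (mul_assoc x b x).symm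
  have hPQ : x * (P' * Q') = (P * Q) * x := by
    rw [← mul_assoc, hP, mul_assoc, hQ, ← mul_assoc]
  have hQP : x * (Q' * P') = (Q * P) * x := by
    rw [← mul_assoc, hQ, mul_assoc, hP, ← mul_assoc]
  have he : x * ω (P' * Q') = ω (P * Q) * x := conj_omega ω hωpow hωid hPQ
  have hf : x * ω (Q' * P') = ω (Q * P) * x := conj_omega ω hωpow hωid hQP
  have hshift : P * ω (Q * P) = ω (P * Q) * P := by
    refine conj_omega ω hωpow hωid ?_
    rw [← mul_assoc]
  -- h2 : ω (Q * P) = P * ω (Q * P)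
  have hF : ω (Q * P) = P * ω (Q * P) := h2 a b x
  calc x * ω (P' * Q')
      = x * (ω (P' * Q') * P') := by rw [← h1 a b x]
    _ = (x * ω (P' * Q')) * P' := by rw [mul_assoc]
    _ = (ω (P * Q) * x) * P' := by rw [he]
    _ = ω (P * Q) * (x * P') := by rw [mul_assoc]
    _ = ω (P * Q) * (P * x) := by rw [hP]
    _ = (ω (P * Q) * P) * x := by rw [mul_assoc]
    _ = (P * ω (Q * P)) * x := by rw [hshift]
    _ = ω (Q * P) * x := by rw [← hF]
    _ = x * ω (Q' * P') := hf.symm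
end

section
/- Let T be a finite semigroup containing no nontrivial right zero subsemigroup and no nontrivial left zero subsemigroup of idempotents. Then every regular element of T has a unique inverse. -/
theorem stmt_16 {T : Type*} [Semigroup T] [Finite T]
    (hrz : ∀ e f : T, e * e = e → f * f = f → e * f = f → f * e = e → e = f)
    (hlz : ∀ e f : T, e * e = e → f * f = f → e * f = e → f * e = f → e = f) :
    ∀ x y y' : T, (x * y * x = x ∧ y * x * y = y) →
      (x * y' * x = x ∧ y' * x * y' = y') → y = y' := by
  rintro x y y' ⟨h1, h2⟩ ⟨h3, h4⟩
  have e1 : x * y * x = x := h1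
  have e2 : x * y' * x = x := h3
  have i1 : (x * y) * (x * y) = x * y := by rw [← mul_assoc, e1]
  have i2 : (x * y') * (x * y') = x * y' := by rw [← mul_assoc, e2]
  have i3 : (y * x) * (y * x) = y * x := by
    rw [← mul_assoc, h2]
  have i4 : (y' * x) * (y' * x) = y' * x := by
    rw [← mul_assoc, h4]
  have r1 : (x * y) * (x * y') = x * y' := by rw [← mul_assoc, e1]
  have r2 : (x * y') * (x * y) = x * y := by rw [← mul_assoc, e2]
  have hxy : x * y = x * y' := hrz _ _ i1 i2 r1 r2
  have l1 : (y * x) * (y' * x) = y * x := by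
    rw [← mul_assoc, mul_assoc y x y', ← hxy, ← mul_assoc, h2]
  have l2 : (y' * x) * (y * x) = y' * x := by
    rw [← mul_assoc, mul_assoc y' x y, hxy, ← mul_assoc, h4]
  have hyx : y * x = y' * x := hlz _ _ i3 i4 l1 l2
  calc y = y * x * y := h2.symm
    _ = y' * (x * y') := by rw [hyx, mul_assoc, hxy]
    _ = y' := by rw [← mul_assoc, h4]
end

section
/- Let S be a finite semigroup such that for all a, b, x ∈ S: ((ax)^ω(bx)^ω)^ω = ((ax)^ω(bx)^ω)^ω (ax)^ω. Then for every a ∈ S, the principal left ideal L(a) = Sa ∪ {a} contains no two distinct idempotents e ≠ f with ef = f and fe = e. -/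
theorem stmt_19 {S : Type*} [Semigroup S] [Finite S]
    (ω : S → S)
    (hωpow : ∀ x : S, ∃ n : ℕ, ω x = pw x n)
    (hωid : ∀ x : S, ω x * ω x = ω x)
    (hωuniq : ∀ (x : S) (n : ℕ), pw x n * pw x n = pw x n → pw x n = ω x)
    (h : ∀ a b x : S,
      ω (ω (a * x) * ω (b * x)) = ω (ω (a * x) * ω (b * x)) * ω (a * x)) :
    ∀ a e f : S, ((∃ s : S, e = s * a) ∨ e = a) → ((∃ s : S, f = s * a) ∨ f = a) →
      e * e = e → f * f = f → e * f = f → f * e = e → e = f := by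
  intro a e f he hf hee hff hef hfe
  -- ω of an idempotent is itself
  have hfix : ∀ x : S, x * x = x → ω x = x := by
    intro x hx
    exact (hωuniq x 0 hx).symm
  -- every idempotent in L(a) has the form c * a for some c
  have hform : ∀ x : S, ((∃ s : S, x = s * a) ∨ x = a) → x * x = x → ∃ c : S, x = c * a := by
    intro x hx hxx
    rcases hx with ⟨s, hs⟩ | hs
    · exact ⟨x * s, by rw [mul_assoc, ← hs, hxx]⟩
    · exact ⟨x, by rw [hs] at hxx ⊢; exact hxx.symm⟩
  obtain ⟨c₁, hc₁⟩ := hform e he hee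
  obtain ⟨c₂, hc₂⟩ := hform f hf hff
  have h1 : ω (c₁ * a) = e := by rw [← hc₁]; exact hfix e hee
  have h2 : ω (c₂ * a) = f := by rw [← hc₂]; exact hfix f hff
  have key := h c₁ c₂ a
  rw [h1, h2, hef, hfix f hff] at key
  -- key : f = f * e
  rw [key, hfe]
end
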